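/- (Thermalization for initial states with a moderate energy distribution.) Let E be a finite-dimensional complex inner product space, H a self-adjoint operator on E, and (ψ_j)_{j∈J} an orthonormal family of eigenvectors of H, H ψ_j = E_j ψ_j, with pairwise distinct eigenvalues E_j, where |J| = D ≥ 1. Let P be a self-adjoint operator with 0 ≤ P ≤ 1 (as quadratic forms). Let φ₀ = ∑_{j∈J} c_j ψ_j be a unit vector and φ(t) := exp(−itH)φ₀. Let V > 0, α > 0, ν > 0, 0 ≤ η < γ with γ − η > 2(α+ν). Assume the thermodynamic bound (1/D)∑_{j∈J}⟨ψ_j, P ψ_j⟩ ≤ exp(−γV) and the effective-dimension bound D_eff := (∑_{j∈J}|c_j|⁴)^{−1} ≥ exp(−ηV)·D. Then there exists τ₀ > 0 such that for every τ ≥ τ₀ one has (1/τ)∫₀^τ ⟨φ(t), P φ(t)⟩ dt ≤ exp(−(α+ν)V). -/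

import Mathlib

/-!
In the eigenbasis, `⟪φ t, P (φ t)⟫ = ∑ j k, c̄ⱼ cₖ ⟪ψⱼ, P ψₖ⟫ e^{i(Eⱼ - Eₖ)t}`. The energies are
distinct, so every off-diagonal phase has a bounded primitive and its time average decays like
`1/τ`: the time average of the expectation tends to the diagonal-ensemble value
`L = ∑ⱼ |cⱼ|² ⟪ψⱼ, P ψⱼ⟫`. Cauchy–Schwarz together with `0 ≤ ⟪ψⱼ, P ψⱼ⟫ ≤ 1` gives
`L² ≤ (∑ⱼ |cⱼ|⁴) ∑ⱼ ⟪ψⱼ, P ψⱼ⟫ ≤ (e^{ηV}/D) · D e^{-γV}`, which lies strictly below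
`e^{-2(α+ν)V}`; a limit strictly below the bound is eventually below it.
-/

open MeasureTheory Filter Topology Complex

theorem NormedSpace.exp_apply_of_apply_eq_smul {𝕂 E : Type*} [RCLike 𝕂] [NormedAddCommGroup E]
    [NormedSpace 𝕂 E] [CompleteSpace E] (A : E →L[𝕂] E) {x : E} {μ : 𝕂} (h : A x = μ • x) :
    NormedSpace.exp A x = NormedSpace.exp μ • x := by
  have hpow : ∀ n : ℕ, (A ^ n) x = μ ^ n • x := by
    intro n
    induction n with
    | zero => simp
    | succ n ih => rw [pow_succ', mul_apply_eq_comp, ih, map_smul, h, smul_smul, pow_succ]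
  have hA := (NormedSpace.exp_series_hasSum_exp' (𝕂 := 𝕂) A).mapL (ContinuousLinearMap.apply 𝕂 E x)
  have hμ := (NormedSpace.exp_series_hasSum_exp' (𝕂 := 𝕂) μ).smul_const x
  refine hA.unique (hμ.congr_fun fun n => ?_)
  simp [hpow, smul_smul]

section TimeAverage

variable {F : Type*} [NormedAddCommGroup F] [NormedSpace ℝ F]

noncomputable def timeAverage (f : ℝ → F) (τ : ℝ) : F := τ⁻¹ • ∫ t in (0 : ℝ)..τ, f t

theorem timeAverage_const [CompleteSpace F] (v : F) {τ : ℝ} (hτ : τ ≠ 0) :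
    timeAverage (fun _ => v) τ = v := by
  simp [timeAverage, smul_smul, hτ]

theorem timeAverage_finsetSum {ι : Type*} (s : Finset ι) {f : ι → ℝ → F} {τ : ℝ}
    (hf : ∀ i ∈ s, IntervalIntegrable (f i) volume 0 τ) :
    timeAverage (fun t => ∑ i ∈ s, f i t) τ = ∑ i ∈ s, timeAverage (f i) τ := by
  simp only [timeAverage, intervalIntegral.integral_finsetSum hf, Finset.smul_sum]

theorem tendsto_timeAverage_zero_of_norm_integral_le {f : ℝ → F} {C : ℝ}
    (hC : ∀ τ, ‖∫ t in (0 : ℝ)..τ, f t‖ ≤ C) : Tendsto (timeAverage f) atTop (𝓝 0) := by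
  refine squeeze_zero_norm' ?_ (tendsto_inv_atTop_zero.mul_const C |>.trans (by simp))
  filter_upwards [eventually_gt_atTop 0] with τ hτ
  rw [timeAverage, norm_smul, norm_inv, Real.norm_of_nonneg hτ.le]
  exact mul_le_mul_of_nonneg_left (hC τ) (by positivity)

end TimeAverage

theorem timeAverage_const_mul (c : ℂ) (f : ℝ → ℂ) (τ : ℝ) :
    timeAverage (fun t => c * f t) τ = c * timeAverage f τ := by
  rw [timeAverage, timeAverage, intervalIntegral.integral_const_mul, mul_smul_comm]

theorem re_timeAverage {f : ℝ → ℂ} {τ : ℝ} (hf : IntervalIntegrable f volume 0 τ) :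
    (timeAverage f τ).re = τ⁻¹ * ∫ t in (0 : ℝ)..τ, (f t).re := by
  rw [timeAverage, smul_re, smul_eq_mul]
  exact congrArg (τ⁻¹ * ·) (intervalIntegral.intervalIntegral_re hf).symm

theorem norm_integral_exp_mul_I_le {ω : ℝ} (hω : ω ≠ 0) (τ : ℝ) :
    ‖∫ t in (0 : ℝ)..τ, exp (ω * I * t)‖ ≤ 2 / |ω| := by
  have hc : (ω : ℂ) * I ≠ 0 := mul_ne_zero (ofReal_ne_zero.2 hω) I_ne_zero
  rw [integral_exp_mul_complex hc, norm_div, norm_mul, norm_I, mul_one, norm_real, Real.norm_eq_abs]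
  gcongr
  calc ‖exp (ω * I * τ) - exp (ω * I * (0 : ℝ))‖
      ≤ ‖exp (ω * I * τ)‖ + ‖exp (ω * I * (0 : ℝ))‖ := norm_sub_le _ _
    _ = 2 := by
      rw [show (ω : ℂ) * I * τ = (ω * τ : ℝ) * I by push_cast; ring, norm_exp_ofReal_mul_I]
      norm_num

theorem tendsto_timeAverage_exp_mul_I (ω : ℝ) :
    Tendsto (timeAverage fun t : ℝ => exp (ω * I * t)) atTop (𝓝 (if ω = 0 then 1 else 0)) := by
  split_ifs with hω
  · subst hω
    refine tendsto_const_nhds.congr' ?_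
    filter_upwards [eventually_ne_atTop 0] with τ hτ
    simpa using (timeAverage_const (1 : ℂ) hτ).symm
  · exact tendsto_timeAverage_zero_of_norm_integral_le (norm_integral_exp_mul_I_le hω)

theorem tendsto_timeAverage_dephasing {J : Type*} [Fintype J] {ω : J → ℝ}
    (hω : Function.Injective ω) (b : J → J → ℂ) :
    Tendsto (timeAverage fun t : ℝ => ∑ j, ∑ k, b j k * exp (↑(ω j - ω k) * I * t))
      atTop (𝓝 (∑ j, b j j)) := by
  have hsplit : (timeAverage fun t : ℝ => ∑ j, ∑ k, b j k * exp (↑(ω j - ω k) * I * t)) =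
      fun τ => ∑ j, ∑ k, b j k * timeAverage (fun t : ℝ => exp (↑(ω j - ω k) * I * t)) τ := by
    funext τ
    rw [timeAverage_finsetSum (f := fun j t => ∑ k, b j k * exp (↑(ω j - ω k) * I * t)) _
      fun j _ => (by fun_prop : Continuous _).intervalIntegrable _ _]
    refine Finset.sum_congr rfl fun j _ => ?_
    rw [timeAverage_finsetSum _ fun k _ => (by fun_prop : Continuous _).intervalIntegrable _ _]
    exact Finset.sum_congr rfl fun k _ => timeAverage_const_mul _ _ τ
  have hdiag : ∑ j, b j j = ∑ j, ∑ k, b j k * if ω j - ω k = 0 then 1 else 0 := by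
    classical
    simp_rw [sub_eq_zero, hω.eq_iff]
    simp
  rw [hsplit, hdiag]
  exact tendsto_finsetSum _ fun j _ => tendsto_finsetSum _ fun k _ =>
    (tendsto_timeAverage_exp_mul_I _).const_mul _

theorem exp_smul_apply_sum_eigenvectors {E J : Type*} [NormedAddCommGroup E] [NormedSpace ℂ E]
    [CompleteSpace E] [Fintype J] (H : E →L[ℂ] E) (ψ : J → E) (μ : J → ℂ)
    (heig : ∀ j, H (ψ j) = μ j • ψ j) (z : ℂ) (c : J → ℂ) :
    NormedSpace.exp (z • H) (∑ j, c j • ψ j) = ∑ j, (c j * exp (z * μ j)) • ψ j := by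
  refine (map_sum _ _ _).trans (Finset.sum_congr rfl fun j _ => ?_)
  have hj : (z • H) (ψ j) = (z * μ j) • ψ j := by rw [smul_apply, heig, smul_smul]
  rw [map_smul, NormedSpace.exp_apply_of_apply_eq_smul _ hj, ← Complex.exp_eq_exp_ℂ, smul_smul]

open scoped ComplexConjugate InnerProductSpace

section Expectation

variable {E J : Type*} [NormedAddCommGroup E] [InnerProductSpace ℂ E] [Fintype J]

theorem inner_sum_smul_map_sum_smul (P : E →L[ℂ] E) (ψ : J → E) (a b : J → ℂ) :
    ⟪∑ j, a j • ψ j, P (∑ k, b k • ψ k)⟫_ℂ = ∑ j, ∑ k, conj (a j) * b k * ⟪ψ j, P (ψ k)⟫_ℂ := by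
  rw [sum_inner]
  refine Finset.sum_congr rfl fun j _ => ?_
  rw [inner_smul_left, map_sum, inner_sum, Finset.mul_sum]
  refine Finset.sum_congr rfl fun k _ => ?_
  rw [map_smul, inner_smul_right]
  ring

theorem inner_exp_smul_apply_sum_eigenvectors [CompleteSpace E] (H P : E →L[ℂ] E) (ψ : J → E)
    (Ej : J → ℝ) (heig : ∀ j, H (ψ j) = (Ej j : ℂ) • ψ j) (c : J → ℂ) (t : ℝ) :
    ⟪NormedSpace.exp ((-I * t) • H) (∑ j, c j • ψ j),
        P (NormedSpace.exp ((-I * t) • H) (∑ j, c j • ψ j))⟫_ℂ =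
      ∑ j, ∑ k, conj (c j) * c k * ⟪ψ j, P (ψ k)⟫_ℂ * exp (↑(Ej j - Ej k) * I * t) := by
  rw [exp_smul_apply_sum_eigenvectors H ψ _ heig, inner_sum_smul_map_sum_smul]
  refine Finset.sum_congr rfl fun j _ => Finset.sum_congr rfl fun k _ => ?_
  have hconj : conj (exp (-I * t * Ej j)) = exp (I * t * Ej j) := by
    rw [← exp_conj]
    simp
  rw [map_mul, hconj, show (↑(Ej j - Ej k) : ℂ) * I * t = I * t * Ej j + -I * t * Ej k by
    push_cast; ring, exp_add]
  ring

theorem tendsto_average_expectation_of_eigenexpansion [CompleteSpace E] (H P : E →L[ℂ] E)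
    (ψ : J → E) (Ej : J → ℝ) (hEj : Function.Injective Ej)
    (heig : ∀ j, H (ψ j) = (Ej j : ℂ) • ψ j) (c : J → ℂ) (φ : ℝ → E)
    (hφ : ∀ t : ℝ, φ t = NormedSpace.exp ((-I * t) • H) (∑ j, c j • ψ j)) :
    Tendsto (fun τ : ℝ => 1 / τ * ∫ t in (0 : ℝ)..τ, (⟪φ t, P (φ t)⟫_ℂ).re) atTop
      (𝓝 (∑ j, ‖c j‖ ^ 2 * (⟪ψ j, P (ψ j)⟫_ℂ).re)) := by
  have hlim := (continuous_re.tendsto _).comp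
    (tendsto_timeAverage_dephasing hEj fun j k => conj (c j) * c k * ⟪ψ j, P (ψ k)⟫_ℂ)
  have hdiag : (∑ j, conj (c j) * c j * ⟪ψ j, P (ψ j)⟫_ℂ).re =
      ∑ j, ‖c j‖ ^ 2 * (⟪ψ j, P (ψ j)⟫_ℂ).re := by
    simp only [re_sum, conj_mul', ← ofReal_pow, re_ofReal_mul]
  rw [hdiag] at hlim
  refine hlim.congr fun τ => ?_
  rw [Function.comp_apply, re_timeAverage ((by fun_prop : Continuous _).intervalIntegrable _ _),
    one_div]
  simp only [hφ, inner_exp_smul_apply_sum_eigenvectors H P ψ Ej heig]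

end Expectation

theorem sq_sum_mul_le_sum_sq_mul_sum {ι : Type*} (s : Finset ι) (w p : ι → ℝ)
    (hp0 : ∀ i ∈ s, 0 ≤ p i) (hp1 : ∀ i ∈ s, p i ≤ 1) :
    (∑ i ∈ s, w i * p i) ^ 2 ≤ (∑ i ∈ s, w i ^ 2) * ∑ i ∈ s, p i :=
  calc (∑ i ∈ s, w i * p i) ^ 2 ≤ (∑ i ∈ s, w i ^ 2) * ∑ i ∈ s, p i ^ 2 :=
        Finset.sum_mul_sq_le_sq_mul_sq s w p
    _ ≤ (∑ i ∈ s, w i ^ 2) * ∑ i ∈ s, p i := by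
        gcongr with i hi
        exact pow_le_of_le_one (hp0 i hi) (hp1 i hi) two_ne_zero

theorem sq_diagonal_average_le_of_effective_dimension {J : Type*} [Fintype J] (c : J → ℂ)
    (p : J → ℝ) (hp0 : ∀ j, 0 ≤ p j) (hp1 : ∀ j, p j ≤ 1) {D ε δ : ℝ} (hD : 0 < D) (hδ : 0 < δ)
    (hmicro : 1 / D * ∑ j, p j ≤ ε) (heff : δ * D ≤ (∑ j, ‖c j‖ ^ 4)⁻¹) :
    (∑ j, ‖c j‖ ^ 2 * p j) ^ 2 ≤ ε / δ := by
  have hS : ∑ j, ‖c j‖ ^ 4 ≤ (δ * D)⁻¹ :=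
    (le_inv_comm₀ (by positivity) (inv_pos.1 ((by positivity : 0 < δ * D).trans_le heff))).1 heff
  have hsum : ∑ j, p j ≤ D * ε := by rwa [one_div, inv_mul_le_iff₀ hD] at hmicro
  calc (∑ j, ‖c j‖ ^ 2 * p j) ^ 2 ≤ (∑ j, (‖c j‖ ^ 2) ^ 2) * ∑ j, p j :=
        sq_sum_mul_le_sum_sq_mul_sum _ _ _ (fun j _ => hp0 j) fun j _ => hp1 j
    _ ≤ (δ * D)⁻¹ * (D * ε) := by
        simp only [← pow_mul]
        exact mul_le_mul hS hsum (Finset.sum_nonneg fun j _ => hp0 j) (by positivity)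
    _ = ε / δ := by field_simp

theorem thermalization_moderate_energy_distribution_general
    {E : Type*} [NormedAddCommGroup E] [InnerProductSpace ℂ E] [FiniteDimensional ℂ E]
    (H : E →L[ℂ] E)
    {J : Type*} [Fintype J] {D : ℕ} (hD : 1 ≤ D)
    (ψ : J → E) (hψ : Orthonormal ℂ ψ)
    (Ej : J → ℝ) (hEj : Function.Injective Ej)
    (heig : ∀ j, H (ψ j) = (Ej j : ℂ) • ψ j)
    (P : E →L[ℂ] E)
    (hP0 : ∀ x : E, 0 ≤ (inner ℂ x (P x) : ℂ).re)
    (hP1 : ∀ x : E, (inner ℂ x (P x) : ℂ).re ≤ ‖x‖ ^ 2)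
    (c : J → ℂ) (φ0 : E) (hφ0 : φ0 = ∑ j, c j • ψ j)
    (φ : ℝ → E) (hφ : ∀ t : ℝ, φ t = NormedSpace.exp (((-Complex.I) * (t : ℂ)) • H) φ0)
    (V α ν γ η : ℝ) (hV : 0 < V)
    (hgap : 2 * (α + ν) < γ - η)
    (htdb : (1 / (D : ℝ)) * ∑ j, (inner ℂ (ψ j) (P (ψ j)) : ℂ).re ≤ Real.exp (-γ * V))
    (heff : Real.exp (-η * V) * (D : ℝ) ≤ (∑ j, ‖c j‖ ^ 4)⁻¹) :
    ∃ τ0 : ℝ, 0 < τ0 ∧ ∀ τ : ℝ, τ0 ≤ τ →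
      (1 / τ) * ∫ t in (0:ℝ)..τ, (inner ℂ (φ t) (P (φ t)) : ℂ).re
        ≤ Real.exp (-(α + ν) * V) := by
  subst hφ0
  have hlim := tendsto_average_expectation_of_eigenexpansion H P ψ Ej hEj heig c φ hφ
  have hp1 : ∀ j, (⟪ψ j, P (ψ j)⟫_ℂ).re ≤ 1 := fun j => by simpa [hψ.1 j] using hP1 (ψ j)
  have hsq := sq_diagonal_average_le_of_effective_dimension c _ (fun j => hP0 (ψ j)) hp1
    (by exact_mod_cast hD) (Real.exp_pos _) htdb heff
  have hL : ∑ j, ‖c j‖ ^ 2 * (⟪ψ j, P (ψ j)⟫_ℂ).re < Real.exp (-(α + ν) * V) := by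
    refine lt_of_pow_lt_pow_left₀ 2 (Real.exp_nonneg _) (hsq.trans_lt ?_)
    rw [← Real.exp_sub, ← Real.exp_nat_mul]
    exact Real.exp_lt_exp.2 (by push_cast; nlinarith)
  obtain ⟨τ₁, hτ₁⟩ := eventually_atTop.1 (hlim.eventually_le_const hL)
  exact ⟨max τ₁ 1, by positivity, fun τ hτ => hτ₁ τ (le_of_max_le_left hτ)⟩

/-- **Thermalization for initial states with a moderate energy distribution.**
Assume the thermodynamic bound `(1/D)∑_j ⟪ψ_j, P ψ_j⟫ ≤ exp(−γV)` and the effective-dimension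
bound `(∑_j |c_j|⁴)⁻¹ ≥ exp(−ηV)·D`, with `γ − η > 2(α+ν)`.  Then the time average of
`⟪φ(t), P φ(t)⟫` is at most `exp(−(α+ν)V)` for all sufficiently large averaging times `τ`. -/
theorem thermalization_moderate_energy_distribution
    {E : Type*} [NormedAddCommGroup E] [InnerProductSpace ℂ E] [FiniteDimensional ℂ E]
    (H : E →L[ℂ] E) (hH : IsSelfAdjoint H)
    {J : Type*} [Fintype J] {D : ℕ} (hD : 1 ≤ D) (hcard : Fintype.card J = D)
    (ψ : J → E) (hψ : Orthonormal ℂ ψ)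
    (Ej : J → ℝ) (hEj : Function.Injective Ej)
    (heig : ∀ j, H (ψ j) = (Ej j : ℂ) • ψ j)
    (P : E →L[ℂ] E) (hP : IsSelfAdjoint P)
    (hP0 : ∀ x : E, 0 ≤ (inner ℂ x (P x) : ℂ).re)
    (hP1 : ∀ x : E, (inner ℂ x (P x) : ℂ).re ≤ ‖x‖ ^ 2)
    (c : J → ℂ) (φ0 : E) (hφ0 : φ0 = ∑ j, c j • ψ j) (hφ0norm : ‖φ0‖ = 1)
    (φ : ℝ → E) (hφ : ∀ t : ℝ, φ t = NormedSpace.exp (((-Complex.I) * (t : ℂ)) • H) φ0)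
    (V α ν γ η : ℝ) (hV : 0 < V) (hα : 0 < α) (hν : 0 < ν) (hη : 0 ≤ η) (hηγ : η < γ)
    (hgap : 2 * (α + ν) < γ - η)
    (htdb : (1 / (D : ℝ)) * ∑ j, (inner ℂ (ψ j) (P (ψ j)) : ℂ).re ≤ Real.exp (-γ * V))
    (heff : Real.exp (-η * V) * (D : ℝ) ≤ (∑ j, ‖c j‖ ^ 4)⁻¹) :
    ∃ τ0 : ℝ, 0 < τ0 ∧ ∀ τ : ℝ, τ0 ≤ τ →
      (1 / τ) * ∫ t in (0:ℝ)..τ, (inner ℂ (φ t) (P (φ t)) : ℂ).re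
        ≤ Real.exp (-(α + ν) * V) :=
  thermalization_moderate_energy_distribution_general H hD ψ hψ Ej hEj heig P hP0 hP1 c φ0 hφ0 φ hφ
    V α ν γ η hV hgap htdb heff
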